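/- Let β > 1 be a real number and suppose that Σ_{j≥1} λ_j β^{−j} = 1 and that lim_{n→∞} υ_{n+2}/υ_n = β². Then limsup_{n→∞} υ_{n−1}/υ_n ≤ 1/β. -/

import Mathlib

/-- An `n`-step self-avoiding walk in `ℤ^d`, given by its `n+1` vertices:
consecutive vertices are nearest neighbors, and all vertices are distinct. -/
def IsSAW (d n : ℕ) (ω : Fin (n + 1) → Fin d → ℤ) : Prop :=
  (∀ i : Fin n, (∑ k : Fin d, |ω i.succ k - ω i.castSucc k|) = 1) ∧ Function.Injective ω

/-- The projection `π₁` onto the first coordinate. -/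
def pi1 {d : ℕ} (x : Fin d → ℤ) : ℤ := if h : 0 < d then x ⟨0, h⟩ else 0

/-- `Υ_n`: the set of `n`-step self-avoiding walks in `ℤ^d` starting at `0` with
`π₁ ω_j > 0` for `1 ≤ j ≤ n`. -/
def Upsilon (d n : ℕ) : Set (Fin (n + 1) → Fin d → ℤ) :=
  {ω | IsSAW d n ω ∧ ω 0 = 0 ∧ ∀ j : Fin (n + 1), 1 ≤ j.val → 0 < pi1 (ω j)}

/-- `υ_n`, the number of walks in `Υ_n`. -/
noncomputable def upsilonCount (d n : ℕ) : ℕ := Set.ncard (Upsilon d n)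

/-- `j` is a renewal time of the `n`-step walk `ω`: `1 ≤ j ≤ n-1` and
`π₁ ω_k ≤ π₁ ω_j < π₁ ω_m` whenever `0 ≤ k ≤ j < m ≤ n`. -/
def HasRenewalAt {d n : ℕ} (ω : Fin (n + 1) → Fin d → ℤ) (j : ℕ) : Prop :=
  1 ≤ j ∧ ∃ hj : j < n, ∀ k m : Fin (n + 1), k.val ≤ j → j < m.val →
    pi1 (ω k) ≤ pi1 (ω ⟨j, Nat.lt_succ_of_lt hj⟩) ∧
      pi1 (ω ⟨j, Nat.lt_succ_of_lt hj⟩) < pi1 (ω m)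

/-- `s(ω) = k`: `k` is the least renewal time of `ω`. -/
def LeastRenewal {d n : ℕ} (ω : Fin (n + 1) → Fin d → ℤ) (k : ℕ) : Prop :=
  HasRenewalAt ω k ∧ ∀ j < k, ¬ HasRenewalAt ω j

/-- A bridge: a walk in `Υ_n` with `π₁ ω_j ≤ π₁ ω_n` for all `0 ≤ j ≤ n`. -/
def IsBridge (d n : ℕ) (ω : Fin (n + 1) → Fin d → ℤ) : Prop :=
  ω ∈ Upsilon d n ∧ ∀ j : Fin (n + 1), pi1 (ω j) ≤ pi1 (ω (Fin.last n))

/-- An irreducible bridge: a bridge with no renewal time. -/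
def IsIrrBridge (d n : ℕ) (ω : Fin (n + 1) → Fin d → ℤ) : Prop :=
  IsBridge d n ω ∧ ∀ j : ℕ, ¬ HasRenewalAt ω j

/-- `λ_k`, the number of `k`-step irreducible bridges. -/
noncomputable def lambdaCount (d k : ℕ) : ℕ :=
  Set.ncard {ω : Fin (k + 1) → Fin d → ℤ | IsIrrBridge d k ω}

/- ### basic lemmas -/

lemma pi1_add {d : ℕ} (x y : Fin d → ℤ) : pi1 (x + y) = pi1 x + pi1 y := by
  unfold pi1; split <;> simp

lemma abs_le_of_mem_upsilon {d n : ℕ} {ω : Fin (n+1) → Fin d → ℤ} (hω : ω ∈ Upsilon d n)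
    (i : Fin (n+1)) (k : Fin d) : |ω i k| ≤ (i.val : ℤ) := by
  obtain ⟨⟨hstep, _⟩, h0, _⟩ := hω
  suffices h : ∀ m (hm : m < n+1), |ω ⟨m, hm⟩ k| ≤ (m : ℤ) by
    simpa using h i.val i.isLt
  intro m
  induction m with
  | zero => intro hm; simp [show (⟨0, hm⟩ : Fin (n+1)) = 0 from rfl, h0]
  | succ m ih =>
    intro hm
    have hm' : m < n + 1 := by omega
    have hs := hstep ⟨m, by omega⟩
    have h1 : |ω ⟨m+1, hm⟩ k - ω ⟨m, hm'⟩ k| ≤ 1 := by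
      calc |ω ⟨m+1, hm⟩ k - ω ⟨m, hm'⟩ k|
          ≤ ∑ k' : Fin d, |ω (Fin.succ ⟨m, by omega⟩) k' - ω (Fin.castSucc ⟨m, by omega⟩) k'| := by
            refine Finset.single_le_sum (f := fun k' => |ω (Fin.succ ⟨m, by omega⟩) k' - ω (Fin.castSucc ⟨m, by omega⟩) k'|) (fun _ _ => abs_nonneg _) (Finset.mem_univ k)
        _ = 1 := hs
    have h2 := ih hm'
    calc |ω ⟨m+1, hm⟩ k| = |ω ⟨m, hm'⟩ k + (ω ⟨m+1, hm⟩ k - ω ⟨m, hm'⟩ k)| := by ring_nf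
      _ ≤ |ω ⟨m, hm'⟩ k| + |ω ⟨m+1, hm⟩ k - ω ⟨m, hm'⟩ k| := abs_add_le _ _
      _ ≤ (m : ℤ) + 1 := add_le_add h2 h1
      _ = ((m+1 : ℕ) : ℤ) := by push_cast; ring

lemma upsilon_finite (d n : ℕ) : (Upsilon d n).Finite := by
  apply Set.Finite.subset (Set.Finite.pi (t := fun _ : Fin (n+1) =>
    (Set.pi Set.univ fun _ : Fin d => Set.Icc (-(n:ℤ)) (n:ℤ))) (fun i => Set.Finite.pi (fun k => Set.finite_Icc _ _)))
  intro ω hω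
  simp only [Set.mem_pi, Set.mem_univ, forall_true_left, Set.mem_Icc]
  intro i k
  have h := abs_le_of_mem_upsilon hω i k
  have : (i.val : ℤ) ≤ (n : ℤ) := by exact_mod_cast Nat.le_of_lt_succ i.isLt
  have := abs_le.mp (h.trans this)
  exact ⟨by linarith [this.1], this.2⟩

def straight (d n : ℕ) : Fin (n+1) → Fin d → ℤ := fun i k => if k.val = 0 then (i.val : ℤ) else 0

lemma pi1_straight {d n : ℕ} (hd : 0 < d) (i : Fin (n+1)) : pi1 (straight d n i) = (i.val : ℤ) := by
  simp [pi1, hd, straight]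

lemma straight_mem {d n : ℕ} (hd : 0 < d) : straight d n ∈ Upsilon d n := by
  refine ⟨⟨?_, ?_⟩, ?_, ?_⟩
  · intro i
    have : ∀ k : Fin d, |straight d n i.succ k - straight d n i.castSucc k|
        = if k = ⟨0, hd⟩ then 1 else 0 := by
      intro k
      by_cases h : k = ⟨0, hd⟩
      · subst h
        simp only [straight, if_pos rfl, Fin.val_succ, Fin.coe_castSucc, if_pos]
        push_cast
        ring_nf
        simp
      · have : k.val ≠ 0 := fun hc => h (Fin.ext hc)
        simp [straight, this, h]
    rw [Finset.sum_congr rfl (fun k _ => this k)]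
    simp
  · intro i i' h
    have := congrFun h ⟨0, hd⟩
    simp only [straight, if_pos rfl] at this
    exact Fin.ext (by exact_mod_cast this)
  · funext k; simp [straight]
  · intro i hi
    rw [pi1_straight hd]
    exact_mod_cast hi

lemma upsilon_pos {d : ℕ} (hd : 0 < d) (n : ℕ) : 0 < upsilonCount d n :=
  (Set.ncard_pos (upsilon_finite d n)).mpr ⟨straight d n, straight_mem hd⟩

lemma irrBridge_subset_upsilon (d k : ℕ) :
    {ω : Fin (k + 1) → Fin d → ℤ | IsIrrBridge d k ω} ⊆ Upsilon d k :=
  fun _ hω => hω.1.1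

lemma irrBridge_finite (d k : ℕ) : {ω : Fin (k + 1) → Fin d → ℤ | IsIrrBridge d k ω}.Finite :=
  (upsilon_finite d k).subset (irrBridge_subset_upsilon d k)

lemma lambda_one {d : ℕ} (hd : 0 < d) : 1 ≤ lambdaCount d 1 := by
  refine (Set.ncard_pos (irrBridge_finite d 1)).mpr ⟨straight d 1, ?_, ?_⟩
  · refine ⟨straight_mem hd, ?_⟩
    intro i
    rw [pi1_straight hd, pi1_straight hd]
    have : i.val ≤ 1 := Nat.le_of_lt_succ i.isLt
    simp [Fin.last]
    omega
  · intro j hj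
    obtain ⟨h1, hlt, _⟩ := hj
    omega

/- ### concatenation -/

def concatW {d j m : ℕ} (τ : Fin (j+1) → Fin d → ℤ) (ρ : Fin (m+1) → Fin d → ℤ) :
    Fin (j+m+1) → Fin d → ℤ :=
  fun i => if h : i.val ≤ j then τ ⟨i.val, by omega⟩
    else τ (Fin.last j) + ρ ⟨i.val - j, by omega⟩

lemma concatW_low {d j m : ℕ} {τ : Fin (j+1) → Fin d → ℤ} {ρ : Fin (m+1) → Fin d → ℤ}
    {i : Fin (j+m+1)} (h : i.val ≤ j) : concatW τ ρ i = τ ⟨i.val, by omega⟩ := dif_pos h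

lemma concatW_high {d j m : ℕ} {τ : Fin (j+1) → Fin d → ℤ} {ρ : Fin (m+1) → Fin d → ℤ}
    (hρ0 : ρ 0 = 0) {i : Fin (j+m+1)} (h : j ≤ i.val) :
    concatW τ ρ i = τ (Fin.last j) + ρ ⟨i.val - j, by omega⟩ := by
  by_cases h' : i.val ≤ j
  · have hij : i.val = j := le_antisymm h' h
    rw [concatW, dif_pos h']
    have e : (⟨i.val - j, by omega⟩ : Fin (m+1)) = 0 := by ext; simp [hij]
    rw [e, hρ0, add_zero]
    congr 1
    ext
    simp [hij, Fin.last]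
  · exact dif_neg h'

section ConcatProps

variable {d j m : ℕ} {τ : Fin (j+1) → Fin d → ℤ} {ρ : Fin (m+1) → Fin d → ℤ}

lemma concat_mem_upsilon (hj : 1 ≤ j) (hτ : IsIrrBridge d j τ) (hρ : ρ ∈ Upsilon d m) :
    concatW τ ρ ∈ Upsilon d (j+m) := by
  obtain ⟨⟨⟨⟨hτstep, hτinj⟩, hτ0, hτpos⟩, hτbr⟩, hτirr⟩ := hτ
  obtain ⟨⟨hρstep, hρinj⟩, hρ0, hρpos⟩ := hρ
  have hρnonneg : ∀ i : Fin (m+1), 0 ≤ pi1 (ρ i) := by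
    intro i
    rcases Nat.eq_zero_or_pos i.val with h | h
    · have : i = 0 := Fin.ext (by simpa using h)
      rw [this, hρ0]
      simp [pi1]
    · exact le_of_lt (hρpos i h)
  refine ⟨⟨?_, ?_⟩, ?_, ?_⟩
  · -- steps
    intro i
    by_cases h : i.val + 1 ≤ j
    · have e1 : concatW τ ρ i.succ = τ ⟨i.val + 1, by omega⟩ := concatW_low (by simpa using h)
      have e2 : concatW τ ρ i.castSucc = τ ⟨i.val, by omega⟩ := concatW_low (by simp; omega)
      rw [e1, e2]
      exact hτstep ⟨i.val, by omega⟩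
    · have hij : j ≤ i.val := by omega
      have e1 : concatW τ ρ i.succ = τ (Fin.last j) + ρ ⟨i.val + 1 - j, by omega⟩ :=
        concatW_high hρ0 (by simp; omega)
      have e2 : concatW τ ρ i.castSucc = τ (Fin.last j) + ρ ⟨i.val - j, by omega⟩ :=
        concatW_high hρ0 (by simp; omega)
      rw [e1, e2]
      simp only [Pi.add_apply, add_sub_add_left_eq_sub]
      have e3 : (⟨i.val + 1 - j, by omega⟩ : Fin (m+1)) = (Fin.succ ⟨i.val - j, by omega⟩ : Fin (m+1)) := by
        ext; simp [Fin.val_succ]; omega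
      rw [e3]
      exact hρstep ⟨i.val - j, by omega⟩
  · -- injectivity
    intro i₁ i₂ heq
    have key : ∀ i₁ i₂ : Fin (j+m+1), i₁.val ≤ j → j < i₂.val →
        concatW τ ρ i₁ ≠ concatW τ ρ i₂ := by
      intro a b ha hb hab
      have e1 : concatW τ ρ a = τ ⟨a.val, by omega⟩ := concatW_low ha
      have e2 : concatW τ ρ b = τ (Fin.last j) + ρ ⟨b.val - j, by omega⟩ :=
        concatW_high hρ0 (le_of_lt hb)
      have hp : pi1 (concatW τ ρ a) < pi1 (concatW τ ρ b) := by
        rw [e1, e2, pi1_add]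
        have h1 : pi1 (τ ⟨a.val, by omega⟩) ≤ pi1 (τ (Fin.last j)) := hτbr _
        have h2 : 0 < pi1 (ρ ⟨b.val - j, by omega⟩) := hρpos _ (by simp; omega)
        linarith
      rw [hab] at hp
      exact lt_irrefl _ hp
    by_cases h1 : i₁.val ≤ j <;> by_cases h2 : i₂.val ≤ j
    · have e1 : concatW τ ρ i₁ = τ ⟨i₁.val, by omega⟩ := concatW_low h1
      have e2 : concatW τ ρ i₂ = τ ⟨i₂.val, by omega⟩ := concatW_low h2
      rw [e1, e2] at heq
      have := hτinj heq
      exact Fin.ext (by simpa [Fin.ext_iff] using this)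
    · exact absurd heq (key i₁ i₂ h1 (by omega))
    · exact absurd heq.symm (key i₂ i₁ h2 (by omega))
    · have e1 : concatW τ ρ i₁ = τ (Fin.last j) + ρ ⟨i₁.val - j, by omega⟩ :=
        concatW_high hρ0 (by omega)
      have e2 : concatW τ ρ i₂ = τ (Fin.last j) + ρ ⟨i₂.val - j, by omega⟩ :=
        concatW_high hρ0 (by omega)
      rw [e1, e2] at heq
      have := hρinj (add_left_cancel heq)
      have : i₁.val - j = i₂.val - j := by simpa [Fin.ext_iff] using this
      exact Fin.ext (by omega)
  · -- starts at 0
    have e : concatW τ ρ 0 = τ ⟨0, by omega⟩ := concatW_low (by simp)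
    rw [e]
    exact hτ0
  · -- positivity
    intro i hi
    by_cases h : i.val ≤ j
    · rw [concatW_low h]
      exact hτpos _ (by simpa using hi)
    · rw [concatW_high hρ0 (by omega), pi1_add]
      have h1 : 0 < pi1 (τ (Fin.last j)) := hτpos _ (by simp [Fin.last]; omega)
      have h2 : 0 ≤ pi1 (ρ ⟨i.val - j, by omega⟩) := hρnonneg _
      linarith

set_option maxHeartbeats 1000000 in
lemma concat_no_renewal_lt (hj : 1 ≤ j) (hτ : IsIrrBridge d j τ) (hρ0 : ρ 0 = 0) :
    ∀ k < j, ¬ HasRenewalAt (concatW τ ρ) k := by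
  intro k hkj hren
  obtain ⟨hk1, hkn, hren⟩ := hren
  refine hτ.2 k ⟨hk1, hkj, ?_⟩
  intro k' m' hk' hm'
  have h := hren ⟨k'.val, by omega⟩ ⟨m'.val, by omega⟩ (by simpa using hk') (by simpa using hm')
  have e1 : concatW τ ρ (⟨k'.val, by omega⟩ : Fin (j+m+1)) = τ ⟨k'.val, by omega⟩ :=
    concatW_low (by simp; omega)
  have e2 : concatW τ ρ (⟨m'.val, by omega⟩ : Fin (j+m+1)) = τ ⟨m'.val, by omega⟩ :=
    concatW_low (by simp; omega)
  have e3 : concatW τ ρ (⟨k, by omega⟩ : Fin (j+m+1)) = τ ⟨k, by omega⟩ :=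
    concatW_low (by simp; omega)
  rw [e1, e2, e3] at h
  have ek : (⟨k'.val, by omega⟩ : Fin (j+1)) = k' := Fin.ext rfl
  have em : (⟨m'.val, by omega⟩ : Fin (j+1)) = m' := Fin.ext rfl
  rwa [ek, em] at h

lemma concat_renewal_at (hj : 1 ≤ j) (hm : 1 ≤ m) (hτ : IsIrrBridge d j τ)
    (hρ : ρ ∈ Upsilon d m) : HasRenewalAt (concatW τ ρ) j := by
  obtain ⟨⟨⟨_, _, hτpos⟩, hτbr⟩, _⟩ := hτ
  obtain ⟨_, hρ0, hρpos⟩ := hρ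
  refine ⟨hj, by omega, ?_⟩
  intro k m' hk hm'
  have ej : concatW τ ρ (⟨j, by omega⟩ : Fin (j+m+1)) = τ (Fin.last j) := by
    rw [concatW_low (by simp)]
    congr 1
  constructor
  · rw [ej, concatW_low (le_trans hk (le_refl j) : k.val ≤ j)]
    exact hτbr _
  · rw [ej, concatW_high hρ0 (by omega), pi1_add]
    have h2 : 0 < pi1 (ρ ⟨m'.val - j, by omega⟩) := hρpos _ (by simp; omega)
    linarith

end ConcatProps

/- ### counting -/

lemma concat_injOn {d j m : ℕ} :
    Set.InjOn (fun p : (Fin (j+1) → Fin d → ℤ) × (Fin (m+1) → Fin d → ℤ) => concatW p.1 p.2)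
      ({τ | IsIrrBridge d j τ} ×ˢ Upsilon d m) := by
  rintro ⟨τ, ρ⟩ ⟨hτ, hρ⟩ ⟨τ', ρ'⟩ ⟨hτ', hρ'⟩ heq
  simp only at heq
  have hρ0 : ρ 0 = 0 := hρ.2.1
  have hρ0' : ρ' 0 = 0 := hρ'.2.1
  have hττ' : τ = τ' := by
    funext i
    have e1 : concatW τ ρ (⟨i.val, by omega⟩ : Fin (j+m+1)) = τ ⟨i.val, by omega⟩ :=
      concatW_low (by simp; omega)
    have e2 : concatW τ' ρ' (⟨i.val, by omega⟩ : Fin (j+m+1)) = τ' ⟨i.val, by omega⟩ :=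
      concatW_low (by simp; omega)
    have : τ ⟨i.val, by omega⟩ = τ' ⟨i.val, by omega⟩ := by
      rw [← e1, ← e2, heq]
    have ei : (⟨i.val, by omega⟩ : Fin (j+1)) = i := Fin.ext rfl
    rwa [ei] at this
  refine Prod.ext hττ' ?_
  funext i
  have e1 : concatW τ ρ (⟨j + i.val, by omega⟩ : Fin (j+m+1))
      = τ (Fin.last j) + ρ ⟨(j + i.val) - j, by omega⟩ := concatW_high hρ0 (by simp)
  have e2 : concatW τ' ρ' (⟨j + i.val, by omega⟩ : Fin (j+m+1))
      = τ' (Fin.last j) + ρ' ⟨(j + i.val) - j, by omega⟩ := concatW_high hρ0' (by simp)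
  have h12 : τ (Fin.last j) + ρ ⟨(j + i.val) - j, by omega⟩
      = τ' (Fin.last j) + ρ' ⟨(j + i.val) - j, by omega⟩ := by rw [← e1, ← e2, heq]
  rw [← hττ'] at h12
  have h3 := add_left_cancel h12
  have ei : (⟨(j + i.val) - j, by omega⟩ : Fin (m+1)) = i := Fin.ext (by simp)
  rwa [ei] at h3

lemma ncard_prod {α β : Type*} (s : Set α) (t : Set β) :
    (s ×ˢ t).ncard = s.ncard * t.ncard := by
  rw [← Nat.card_coe_set_eq, ← Nat.card_coe_set_eq, ← Nat.card_coe_set_eq,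
    ← Nat.card_prod]
  exact Nat.card_congr (Equiv.Set.prod s t)

/-- the per-length counting bound, stated in the `(j, m)` world. -/
lemma per_length (d : ℕ) (hd : 0 < d) (j m : ℕ) (hj : 1 ≤ j) :
    lambdaCount d j * upsilonCount d m ≤
      Set.ncard {ω : Fin (j + m + 1) → Fin d → ℤ | ω ∈ Upsilon d (j + m) ∧
        (HasRenewalAt ω j ∨ j = j + m) ∧ ∀ k < j, ¬ HasRenewalAt ω k} := by
  classical
  set A := {τ : Fin (j+1) → Fin d → ℤ | IsIrrBridge d j τ}
  set B := Upsilon d m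
  set T := {ω : Fin (j + m + 1) → Fin d → ℤ | ω ∈ Upsilon d (j + m) ∧
        (HasRenewalAt ω j ∨ j = j + m) ∧ ∀ k < j, ¬ HasRenewalAt ω k}
  have hTfin : T.Finite := (upsilon_finite d (j+m)).subset (fun ω hω => hω.1)
  have hsub : (fun p : (Fin (j+1) → Fin d → ℤ) × (Fin (m+1) → Fin d → ℤ) =>
      concatW p.1 p.2) '' (A ×ˢ B) ⊆ T := by
    rintro ω ⟨⟨τ, ρ⟩, ⟨hτ, hρ⟩, rfl⟩
    refine ⟨concat_mem_upsilon hj hτ hρ, ?_, concat_no_renewal_lt hj hτ hρ.2.1⟩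
    rcases Nat.eq_zero_or_pos m with hm | hm
    · right; omega
    · left; exact concat_renewal_at hj hm hτ hρ
  calc lambdaCount d j * upsilonCount d m = (A ×ˢ B).ncard := (ncard_prod A B).symm
    _ = ((fun p : (Fin (j+1) → Fin d → ℤ) × (Fin (m+1) → Fin d → ℤ) =>
        concatW p.1 p.2) '' (A ×ˢ B)).ncard := (Set.ncard_image_of_injOn concat_injOn).symm
    _ ≤ T.ncard := Set.ncard_le_ncard hsub hTfin

/-- the key combinatorial inequality. -/
lemma key_ineq (d : ℕ) (hd : 0 < d) (n J : ℕ) (hJ : J ≤ n) :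
    ∑ j ∈ Finset.range J, lambdaCount d (j+1) * upsilonCount d (n - (j+1))
      ≤ upsilonCount d n := by
  classical
  set T : ℕ → Set (Fin (n+1) → Fin d → ℤ) := fun jj =>
    {ω | ω ∈ Upsilon d n ∧ (HasRenewalAt ω jj ∨ jj = n) ∧ ∀ k < jj, ¬ HasRenewalAt ω k}
  have hTsub : ∀ jj, T jj ⊆ Upsilon d n := fun jj ω hω => hω.1
  have hTfin : ∀ jj, (T jj).Finite := fun jj => (upsilon_finite d n).subset (hTsub jj)
  have hper : ∀ jj, 1 ≤ jj → jj ≤ n →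
      lambdaCount d jj * upsilonCount d (n - jj) ≤ (T jj).ncard := by
    intro jj h1 h2
    have he : jj + (n - jj) = n := by omega
    have := per_length d hd jj (n - jj) h1
    rw [he] at this
    exact this
  -- pairwise disjoint
  have hdisj : ∀ jj jj', 1 ≤ jj → jj' ≤ n → jj < jj' → ∀ ω, ω ∈ T jj → ω ∈ T jj' → False := by
    intro jj jj' h1 h2 hlt ω hω hω'
    have hjn : jj < n := lt_of_lt_of_le hlt h2
    rcases hω.2.1 with hren | heq
    · exact hω'.2.2 jj hlt hren
    · omega
  -- Finset manipulation
  let F : ℕ → Finset (Fin (n+1) → Fin d → ℤ) := fun jj => (hTfin jj).toFinset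
  have hcard : ∀ jj, (F jj).card = (T jj).ncard := by
    intro jj
    rw [Set.ncard_eq_toFinset_card _ (hTfin jj)]
  have hbu : ∑ j ∈ Finset.range J, (F (j+1)).card
      = ((Finset.range J).biUnion (fun j => F (j+1))).card := by
    rw [Finset.card_biUnion]
    intro j hj j' hj' hne
    simp only [Finset.mem_coe, Finset.mem_range] at hj hj'
    rw [Function.onFun, Finset.disjoint_left]
    intro ω hω hω'
    have hω1 : ω ∈ T (j+1) := by simpa [F] using hω
    have hω2 : ω ∈ T (j'+1) := by simpa [F] using hω'
    rcases lt_or_gt_of_ne hne with h | h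
    · exact hdisj (j+1) (j'+1) (by omega) (by omega) (by omega) ω hω1 hω2
    · exact hdisj (j'+1) (j+1) (by omega) (by omega) (by omega) ω hω2 hω1
  have hsub2 : ((Finset.range J).biUnion (fun j => F (j+1)))
      ⊆ (upsilon_finite d n).toFinset := by
    intro ω hω
    simp only [Finset.mem_biUnion] at hω
    obtain ⟨j, _, hω⟩ := hω
    have : ω ∈ T (j+1) := by simpa [F] using hω
    simp only [Set.Finite.mem_toFinset]
    exact hTsub _ this
  calc ∑ j ∈ Finset.range J, lambdaCount d (j+1) * upsilonCount d (n - (j+1))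
      ≤ ∑ j ∈ Finset.range J, (F (j+1)).card := by
        refine Finset.sum_le_sum fun j hj => ?_
        simp only [Finset.mem_range] at hj
        rw [hcard]
        exact hper (j+1) (by omega) (by omega)
    _ = ((Finset.range J).biUnion (fun j => F (j+1))).card := hbu
    _ ≤ (upsilon_finite d n).toFinset.card := Finset.card_le_card hsub2
    _ = upsilonCount d n := by
        rw [upsilonCount, Set.ncard_eq_toFinset_card _ (upsilon_finite d n)]

/- ### analytic part -/

open Filter

lemma ratio_lim {u : ℕ → ℝ} {β : ℝ} (hβ : 0 < β) (hu : ∀ n, 0 < u n)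
    (h2 : Tendsto (fun n => u (n+2) / u n) atTop (nhds (β^2))) (k : ℕ) :
    Tendsto (fun n => u (n - 2*k) / u n) atTop (nhds ((β^(2*k))⁻¹)) := by
  induction k with
  | zero =>
    have he : (fun n : ℕ => u (n - 2*0) / u n) = fun _ => 1 :=
      funext fun n => by simp [div_self (hu n).ne']
    rw [he, Nat.mul_zero, pow_zero, inv_one]
    exact tendsto_const_nhds
  | succ k ih =>
    have hβ2 : (β^2) ≠ 0 := by positivity
    have h2' : Tendsto (fun n : ℕ => u n / u (n-2)) atTop (nhds (β^2)) := by
      have h := h2.comp (tendsto_sub_atTop_nat 2)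
      apply h.congr'
      filter_upwards [eventually_ge_atTop 2] with n hn
      have : n - 2 + 2 = n := by omega
      simp only [Function.comp_apply, this]
    have hinv : Tendsto (fun n : ℕ => u (n-2) / u n) atTop (nhds ((β^2)⁻¹)) := by
      have h := h2'.inv₀ hβ2
      exact h.congr (fun n => inv_div _ _)
    have hcomp := (ih.comp (tendsto_sub_atTop_nat 2)).mul hinv
    have heq : (β ^ (2*k))⁻¹ * (β^2)⁻¹ = (β^(2*(k+1)))⁻¹ := by
      rw [← mul_inv, ← pow_add, show 2*k + 2 = 2*(k+1) from by ring]
    rw [heq] at hcomp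
    apply hcomp.congr
    intro n
    have e : n - 2 - 2*k = n - 2*(k+1) := by omega
    simp only [Function.comp_apply, e]
    exact div_mul_div_cancel₀ (hu (n-2)).ne' 


/-- Kesten's relations imply `limsup υ_{n−1}/υ_n ≤ 1/β`:
if `β > 1`, `Σ_{j≥1} λ_j β^{−j} = 1`, and `υ_{n+2}/υ_n → β²`, then
`limsup_{n→∞} υ_{n−1}/υ_n ≤ 1/β`. -/
theorem limsup_upsilon_ratio_le (d : ℕ) (hd : 2 ≤ d) (β : ℝ) (hβ : 1 < β)
    (h1 : ∑' j : ℕ, (lambdaCount d (j + 1) : ℝ) / β ^ (j + 1) = 1)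
    (h2 : Filter.Tendsto (fun n : ℕ => (upsilonCount d (n + 2) : ℝ) / (upsilonCount d n : ℝ))
      Filter.atTop (nhds (β ^ 2))) :
    Filter.limsup (fun n : ℕ => (upsilonCount d n : ℝ) / (upsilonCount d (n + 1) : ℝ))
      Filter.atTop ≤ 1 / β := by
  have hd0 : 0 < d := by omega
  have hβ0 : 0 < β := by linarith
  set u : ℕ → ℝ := fun n => (upsilonCount d n : ℝ) with hu_def
  have hu : ∀ n, 0 < u n := fun n => by
    simp only [hu_def]
    exact_mod_cast upsilon_pos hd0 n
  set a : ℕ → ℝ := fun n => u n / u (n + 1) with ha_def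
  have ha_nonneg : ∀ n, 0 ≤ a n := fun n => div_nonneg (hu n).le (hu (n+1)).le
  by_contra hcon
  push_neg at hcon
  obtain ⟨c, hc1, hc2⟩ := exists_between hcon
  have hc0 : 0 < c := lt_trans (by positivity) hc1
  have hcβ : 1 < c * β := by
    rw [div_lt_iff₀ hβ0] at hc1; linarith
  have hfreq : ∃ᶠ n in atTop, c < a n :=
    frequently_lt_of_lt_limsup (isCoboundedUnder_le_of_le atTop ha_nonneg) hc2
  -- summability of Kesten's series
  set f : ℕ → ℝ := fun j => (lambdaCount d (j + 1) : ℝ) / β ^ (j + 1) with hf_def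
  have hfnn : ∀ j, 0 ≤ f j := fun j => div_nonneg (Nat.cast_nonneg _) (pow_pos hβ0 _).le
  have hsum : Summable f := by
    by_contra h
    rw [tsum_eq_zero_of_not_summable h] at h1
    norm_num at h1
  have hP : Tendsto (fun J => ∑ j ∈ Finset.range J, f j) atTop (nhds 1) := by
    rw [← h1]
    exact hsum.hasSum.tendsto_sum_nat
  set δ : ℝ := (c * β - 1) / β with hδ_def
  have hδ0 : 0 < δ := div_pos (by linarith) hβ0
  -- the per-J claim
  have claim : ∀ J : ℕ, 1 ≤ J → ∑ j ∈ Finset.range J, f j ≤ 1 - δ := by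
    intro J hJ1
    set W : ℕ → ℝ := fun n => ∑ j ∈ Finset.range J,
      (if Even (j+1) then (lambdaCount d (j+1) : ℝ) * (u (n - (j+1)) / u n)
       else (lambdaCount d (j+1) : ℝ) * c * (u ((n-1) - j) / u (n-1))) with hW_def
    set D : ℝ := ∑ j ∈ Finset.range J,
      (if Even (j+1) then (lambdaCount d (j+1) : ℝ) * (β ^ (j+1))⁻¹
       else (lambdaCount d (j+1) : ℝ) * c * (β ^ j)⁻¹) with hD_def
    have hWD : Tendsto W atTop (nhds D) := by
      apply tendsto_finset_sum
      intro j _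
      by_cases hev : Even (j+1)
      · simp only [if_pos hev]
        obtain ⟨r, hr⟩ := hev
        have hr' : j + 1 = 2 * r := by omega
        rw [hr']
        exact (ratio_lim hβ0 hu h2 r).const_mul _
      · simp only [if_neg hev]
        have hev' : Even j := by rwa [Nat.even_add_one, not_not] at hev
        obtain ⟨r, hr⟩ := hev'
        have hr' : j = 2 * r := by omega
        rw [hr']
        have hlim := (ratio_lim hβ0 hu h2 r).comp (tendsto_sub_atTop_nat 1)
        have : Tendsto (fun n : ℕ => u ((n-1) - 2*r) / u (n-1)) atTop (nhds ((β ^ (2*r))⁻¹)) := by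
          apply hlim.congr
          intro n
          simp only [Function.comp_apply]
        exact this.const_mul _
    -- frequently, W n ≤ 1
    have hfreq' : ∃ᶠ n in atTop, (c < a (n-1) ∧ J + 1 ≤ n) := by
      rw [frequently_atTop] at hfreq ⊢
      intro N
      obtain ⟨m, hm, hcm⟩ := hfreq (max N J)
      refine ⟨m + 1, by omega, ?_, by omega⟩
      simpa using hcm
    have hW1 : ∃ᶠ n in atTop, W n ≤ 1 := by
      refine hfreq'.mono ?_
      rintro n ⟨hcn, hJn⟩
      have hkey := key_ineq d hd0 n J (by omega)
      have hkeyR : ∑ j ∈ Finset.range J, (lambdaCount d (j+1) : ℝ) * u (n - (j+1)) ≤ u n := by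
        simp only [hu_def]
        exact_mod_cast hkey
      have hsum_le : ∑ j ∈ Finset.range J,
          (lambdaCount d (j+1) : ℝ) * (u (n - (j+1)) / u n) ≤ 1 := by
        have hsd : ∑ j ∈ Finset.range J, (lambdaCount d (j+1) : ℝ) * (u (n - (j+1)) / u n)
            = (∑ j ∈ Finset.range J, (lambdaCount d (j+1) : ℝ) * u (n - (j+1))) / u n := by
          rw [Finset.sum_div]
          exact Finset.sum_congr rfl fun j _ => (mul_div_assoc _ _ _).symm
        rw [hsd, div_le_one (hu n)]
        exact hkeyR
      refine le_trans ?_ hsum_le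
      rw [hW_def]
      apply Finset.sum_le_sum
      intro j hj
      simp only [Finset.mem_range] at hj
      by_cases hev : Even (j+1)
      · rw [if_pos hev]
      · rw [if_neg hev]
        have he1 : n - (j+1) = (n-1) - j := by omega
        have he3 : (n-1) + 1 = n := by omega
        have he2 : u ((n-1)-j) / u (n-1) * a (n-1) = u (n-(j+1)) / u n := by
          rw [ha_def]
          simp only [he3, he1]
          exact div_mul_div_cancel₀ (hu (n-1)).ne'
        have hq : 0 ≤ u ((n-1)-j) / u (n-1) := div_nonneg (hu _).le (hu _).le
        have hcq : c * (u ((n-1)-j) / u (n-1)) ≤ a (n-1) * (u ((n-1)-j) / u (n-1)) :=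
          mul_le_mul_of_nonneg_right (le_of_lt hcn) hq
        calc (lambdaCount d (j+1) : ℝ) * c * (u ((n-1)-j) / u (n-1))
            = (lambdaCount d (j+1) : ℝ) * (c * (u ((n-1)-j) / u (n-1))) := by ring
          _ ≤ (lambdaCount d (j+1) : ℝ) * (a (n-1) * (u ((n-1)-j) / u (n-1))) :=
              mul_le_mul_of_nonneg_left hcq (Nat.cast_nonneg _)
          _ = (lambdaCount d (j+1) : ℝ) * (u (n-(j+1)) / u n) := by rw [← he2]; ring
    -- D ≤ 1
    have hD1 : D ≤ 1 := by
      by_contra hD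
      push_neg at hD
      have hevD := hWD.eventually (eventually_gt_nhds hD)
      obtain ⟨n, h1n, h2n⟩ := (hW1.and_eventually hevD).exists
      linarith
    -- lower bound for D
    have hlow : ∑ j ∈ Finset.range J, f j + δ ≤ D := by
      have hterms : ∑ j ∈ Finset.range J, (f j + if j = 0 then δ else 0) ≤ D := by
        rw [hD_def]
        apply Finset.sum_le_sum
        intro j hj
        by_cases hev : Even (j+1)
        · have hj0 : j ≠ 0 := by
            rintro rfl
            exact Nat.not_even_one (by simpa using hev)
          rw [if_pos hev, if_neg hj0, add_zero, hf_def]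
          simp only []
          rw [div_eq_mul_inv]
        · rw [if_neg hev]
          have hterm : (lambdaCount d (j+1) : ℝ) * c * (β ^ j)⁻¹ = f j * (c * β) := by
            rw [hf_def]
            simp only []
            rw [pow_succ]
            field_simp
          rw [hterm]
          by_cases hj0 : j = 0
          · subst hj0
            rw [if_pos rfl]
            have hf0 : 1/β ≤ f 0 := by
              rw [hf_def]
              simp only []
              rw [pow_one]
              have h1l : (1:ℝ) ≤ (lambdaCount d 1 : ℝ) := by exact_mod_cast lambda_one hd0
              exact (div_le_div_iff_of_pos_right hβ0).mpr h1l
            rw [hδ_def]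
            have h5 : (c*β - 1)/β ≤ f 0 * (c*β - 1) := by
              calc (c*β-1)/β = (1/β) * (c*β-1) := by ring
                _ ≤ f 0 * (c*β-1) := mul_le_mul_of_nonneg_right hf0 (by linarith)
            have h6 : f 0 * (c*β) = f 0 + f 0 * (c*β-1) := by ring
            rw [h6]
            linarith
          · rw [if_neg hj0, add_zero]
            nlinarith [mul_nonneg (hfnn j) (le_of_lt (sub_pos.mpr hcβ))]
      have hsumite : ∑ j ∈ Finset.range J, (if j = 0 then δ else 0) = δ := by
        rw [Finset.sum_ite_eq' (Finset.range J) 0 (fun _ => δ),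
          if_pos (Finset.mem_range.mpr (by omega))]
      calc ∑ j ∈ Finset.range J, f j + δ
          = ∑ j ∈ Finset.range J, (f j + if j = 0 then δ else 0) := by
            rw [Finset.sum_add_distrib, hsumite]
        _ ≤ D := hterms
    linarith
  -- final contradiction
  have hev : ∀ᶠ J in atTop, 1 - δ < ∑ j ∈ Finset.range J, f j :=
    hP.eventually (eventually_gt_nhds (by linarith))
  obtain ⟨J, hJ1, hJ2⟩ := ((eventually_ge_atTop 1).and hev).exists
  linarith [claim J hJ1]
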